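/- arXiv:1102.1453 — 2 statements merged into one kernel-verified Lean document; each statement's English description precedes it below -/
import Mathlib

section
/- The graph on standard Young tableaux of a fixed shape λ whose edges are the initial dual Knuth transformations is connected. -/
/-- `f` is a standard Young tableau of shape `μ ⊢ r` (with `r = μ.card`):
it is zero off the diagram, restricts to a bijection from the cells of `μ` onto
`{1, ..., r}`, and its entries strictly increase along rows and columns. -/
def IsSYT (μ : YoungDiagram) (f : ℕ × ℕ → ℕ) : Prop :=
  (∀ c, c ∉ μ → f c = 0) ∧
  Set.BijOn f (μ.cells : Set (ℕ × ℕ)) (Set.Icc 1 μ.card) ∧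
  (∀ c1 ∈ μ, ∀ c2 ∈ μ, c1.1 = c2.1 → c1.2 < c2.2 → f c1 < f c2) ∧
  (∀ c1 ∈ μ, ∀ c2 ∈ μ, c1.2 = c2.2 → c1.1 < c2.1 → f c1 < f c2)

/-- The descent set `R(Q)` of a standard Young tableau: those `i` such that
`i+1` lies strictly south of (in a strictly lower row than) `i`. -/
def SYTDescents (μ : YoungDiagram) (f : ℕ × ℕ → ℕ) : Set ℕ :=
  { i | ∃ c ∈ μ, ∃ c' ∈ μ, f c = i ∧ f c' = i + 1 ∧ c.1 < c'.1 }

/-- `f'` is obtained from `f` by the dual Knuth transformation exchanging the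
entries `i` and `i+1` (both are standard Young tableaux of shape `μ`). -/
def DKT (μ : YoungDiagram) (i : ℕ) (f f' : ℕ × ℕ → ℕ) : Prop :=
  IsSYT μ f ∧ IsSYT μ f' ∧ 1 ≤ i ∧
  ∀ c, f' c = if f c = i then i + 1 else if f c = i + 1 then i else f c

/-- `f` and `f'` differ by an *initial* dual Knuth transformation: a dual Knuth
transformation exchanging the entries `i`, `i+1` such that
`|R(Q') ∩ {i-1, i}| = |R(Q) ∩ {i-1, i}| = 1`. -/
def InitialDKT (μ : YoungDiagram) (f f' : ℕ × ℕ → ℕ) : Prop :=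
  ∃ i, DKT μ i f f' ∧
    (SYTDescents μ f ∩ {i - 1, i}).ncard = 1 ∧
    (SYTDescents μ f' ∩ {i - 1, i}).ncard = 1

/-!
Induction on `n = |λ|`; the largest entry `n` of a tableau always sits at a corner. If `n` sits
at the corner `c` and `c'` is the next corner below `c`, fill `λ ∖ c` with `n - 1` at `c'` and
`n - 2` at a corner `p` of `λ ∖ {c, c'}` lying in a row between those of `c` and `c'`. By induction
the tableau is connected to this one inside `λ ∖ c`, and adding back `n` at `c` preserves initial
dual Knuth transformations, since their descent windows stay below `n - 1`. Exchanging `n - 1` and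
`n` is then initial: `n - 2` is a descent before the exchange and `n - 1` is one after it.
Repeating this moves `n` to the corner of the last row, where the two tableaux agree in the position
of `n`, and induction on `λ ∖ {that corner}` finishes.
-/

namespace YoungDiagram

def IsCorner (μ : YoungDiagram) (c : ℕ × ℕ) : Prop :=
  c ∈ μ ∧ (c.1 + 1, c.2) ∉ μ ∧ (c.1, c.2 + 1) ∉ μ

variable {μ : YoungDiagram} {c : ℕ × ℕ}

theorem isCorner_iff : μ.IsCorner c ↔ c.2 + 1 = μ.rowLen c.1 ∧ μ.rowLen (c.1 + 1) ≤ c.2 := by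
  obtain ⟨a, b⟩ := c
  simp only [IsCorner, mem_iff_lt_rowLen]
  omega

theorem IsCorner.mem (hc : μ.IsCorner c) : c ∈ μ := hc.1

theorem IsCorner.eq_of_le {x : ℕ × ℕ} (hc : μ.IsCorner c) (hx : x ∈ μ) (hcx : c ≤ x) : x = c := by
  rw [isCorner_iff] at hc
  rw [← Prod.mk.eta (p := x), mem_iff_lt_rowLen] at hx
  obtain ⟨h₁, h₂⟩ := hcx
  have : x.1 = c.1 := by
    by_contra hne
    have := μ.rowLen_anti (c.1 + 1) x.1 (by omega)
    omega
  exact Prod.ext this (by rw [this] at hx; omega)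

theorem exists_isCorner (h : μ.card ≠ 0) : ∃ c, μ.IsCorner c := by
  obtain ⟨c, hc, hmax⟩ := Finset.exists_maximal (Finset.card_ne_zero.1 h)
  rw [mem_cells] at hc
  refine ⟨c, hc, fun h' => ?_, fun h' => ?_⟩
  · simpa using (hmax ((mem_cells _).2 h') ⟨Nat.le_succ _, le_rfl⟩).1
  · simpa using (hmax ((mem_cells _).2 h') ⟨le_rfl, Nat.le_succ _⟩).2

theorem IsCorner.eq_of_rowLen_succ_eq_zero {d : ℕ × ℕ} (hc : μ.IsCorner c) (hd : μ.IsCorner d)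
    (hc₀ : μ.rowLen (c.1 + 1) = 0) (hd₀ : μ.rowLen (d.1 + 1) = 0) : c = d := by
  rw [isCorner_iff] at hc hd
  have h₁ : c.1 ≤ d.1 := by
    by_contra! h
    have := μ.rowLen_anti (d.1 + 1) c.1 h
    omega
  have h₂ : d.1 ≤ c.1 := by
    by_contra! h
    have := μ.rowLen_anti (c.1 + 1) d.1 h
    omega
  have h : c.1 = d.1 := le_antisymm h₁ h₂
  exact Prod.ext h (by rw [h] at hc; omega)

theorem rowLen_eq_of_forall_mem_iff {i n : ℕ} (h : ∀ j, (i, j) ∈ μ ↔ j < n) : μ.rowLen i = n := by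
  have h₁ := h (μ.rowLen i)
  have h₂ := h n
  rw [mem_iff_lt_rowLen] at h₁ h₂
  omega

def eraseCorner (μ : YoungDiagram) (c : ℕ × ℕ) (hc : μ.IsCorner c) : YoungDiagram where
  cells := μ.cells.erase c
  isLowerSet x y hxy hy := by
    simp only [Finset.coe_erase, Set.mem_sdiff, Finset.mem_coe, mem_cells,
      Set.mem_singleton_iff] at hy ⊢
    exact ⟨μ.isLowerSet hxy hy.1, fun hyc => hy.2 (hc.eq_of_le hy.1 (hyc ▸ hxy))⟩

variable {hc : μ.IsCorner c}

@[simp]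
theorem mem_eraseCorner {x : ℕ × ℕ} : x ∈ μ.eraseCorner c hc ↔ x ∈ μ ∧ x ≠ c := by
  rw [← mem_cells]
  simp [eraseCorner, and_comm]

theorem coe_cells_eraseCorner :
    ((μ.eraseCorner c hc).cells : Set (ℕ × ℕ)) = (μ.cells : Set (ℕ × ℕ)) \ {c} :=
  Finset.coe_erase c μ.cells

theorem insert_coe_cells_eraseCorner :
    insert c ((μ.eraseCorner c hc).cells : Set (ℕ × ℕ)) = μ.cells := by
  rw [coe_cells_eraseCorner, Set.insert_sdiff_singleton, Set.insert_eq_of_mem]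
  exact (mem_cells c).2 hc.mem

theorem card_eraseCorner : (μ.eraseCorner c hc).card + 1 = μ.card :=
  Finset.card_erase_add_one ((mem_cells c).2 hc.mem)

theorem rowLen_eraseCorner (i : ℕ) :
    (μ.eraseCorner c hc).rowLen i = if i = c.1 then μ.rowLen i - 1 else μ.rowLen i := by
  have hc' := isCorner_iff.1 hc
  apply rowLen_eq_of_forall_mem_iff
  intro j
  obtain ⟨a, b⟩ := c
  rw [mem_eraseCorner, mem_iff_lt_rowLen, Ne, Prod.mk.injEq]
  dsimp only at hc'
  split_ifs with h
  · subst h; omega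
  · omega

/-- `c'` ends the last row of length `L = μ.rowLen (c.1 + 1)`, and `p` ends the row just above `c'`
once `c` and `c'` are removed. -/
theorem IsCorner.exists_corners_below (hc : μ.IsCorner c) (hbelow : 0 < μ.rowLen (c.1 + 1)) :
    ∃ (c' : ℕ × ℕ) (hc' : (μ.eraseCorner c hc).IsCorner c') (p : ℕ × ℕ),
      ((μ.eraseCorner c hc).eraseCorner c' hc').IsCorner p ∧ c.1 ≤ p.1 ∧ p.1 < c'.1 ∧
        μ.IsCorner c' := by
  have hcL := isCorner_iff.1 hc
  generalize hL : μ.rowLen (c.1 + 1) = L at hbelow hcL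
  obtain ⟨r, hcr, hr⟩ : ∃ r, c.1 + 1 ≤ r ∧ r + 1 = μ.colLen (L - 1) := by
    have := mem_iff_lt_colLen.1 (mem_iff_lt_rowLen.2 (show L - 1 < μ.rowLen (c.1 + 1) by omega))
    exact ⟨μ.colLen (L - 1) - 1, by omega, by omega⟩
  have hrL : μ.rowLen r = L := by
    have := mem_iff_lt_rowLen.1 (mem_iff_lt_colLen.2 (show r < μ.colLen (L - 1) by omega))
    have := μ.rowLen_anti (c.1 + 1) r hcr
    omega
  have hrL' : μ.rowLen (r + 1) < L := by
    have : (r + 1, L - 1) ∉ μ := by rw [mem_iff_lt_colLen]; omega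
    rw [mem_iff_lt_rowLen] at this
    omega
  have hr₁ : L ≤ μ.rowLen (r - 1) := hrL ▸ μ.rowLen_anti _ _ (by omega)
  have hr₂ : r - 1 ≠ c.1 ∨ L < μ.rowLen (r - 1) := by
    refine (ne_or_eq _ _).imp_right fun h => ?_
    rw [h]
    omega
  have hc' : (μ.eraseCorner c hc).IsCorner (r, L - 1) := by
    rw [isCorner_iff]
    simp only [rowLen_eraseCorner]
    split_ifs <;> omega
  refine ⟨(r, L - 1), hc',
    (r - 1, ((μ.eraseCorner c hc).eraseCorner (r, L - 1) hc').rowLen (r - 1) - 1),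
    isCorner_iff.2 ?_, by dsimp only; omega, by dsimp only; omega,
    isCorner_iff.2 ⟨by dsimp only; omega, by dsimp only; omega⟩⟩
  simp only [rowLen_eraseCorner, Nat.sub_add_cancel (show 1 ≤ r by omega)]
  split_ifs <;> omega

end YoungDiagram

theorem Set.ncard_inter_pair_eq_one_iff {α : Type*} {s : Set α} {a b : α} (hab : a ≠ b) :
    (s ∩ {a, b}).ncard = 1 ↔ (a ∈ s ↔ b ∉ s) := by
  by_cases ha : a ∈ s <;> by_cases hb : b ∈ s
  · rw [Set.inter_eq_right.2 (Set.pair_subset ha hb), Set.ncard_pair hab]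
    simp [ha, hb]
  · rw [show s ∩ {a, b} = {a} by ext; aesop]
    simp [ha, hb]
  · rw [show s ∩ {a, b} = {b} by ext; aesop]
    simp [ha, hb]
  · rw [show s ∩ {a, b} = ∅ by ext; aesop]
    simp [ha, hb]

open YoungDiagram Function

theorem isSYT_iff {μ : YoungDiagram} {f : ℕ × ℕ → ℕ} :
    IsSYT μ f ↔ (∀ c, c ∉ μ → f c = 0) ∧ Set.BijOn f μ.cells (Set.Icc 1 μ.card) ∧
      StrictMonoOn f μ.cells := by
  refine and_congr_right fun _ => and_congr_right fun _ => ⟨fun ⟨hrow, hcol⟩ => ?_, fun h => ?_⟩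
  · intro x hx y hy hxy
    simp only [Finset.mem_coe, mem_cells] at hx hy
    have hz : (x.1, y.2) ∈ μ := μ.up_left_mem hxy.le.1 le_rfl hy
    have h₁ : f x ≤ f (x.1, y.2) := by
      rcases hxy.le.2.lt_or_eq with h | h
      · exact (hrow x hx _ hz rfl h).le
      · rw [← h]
    have h₂ : f (x.1, y.2) ≤ f y := by
      rcases hxy.le.1.lt_or_eq with h | h
      · exact (hcol _ hz y hy rfl h).le
      · rw [h]
    rcases hxy.le.2.lt_or_eq with h | h
    · exact (hrow x hx _ hz rfl h).trans_le h₂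
    · have : x.1 < y.1 := (Prod.lt_iff.1 hxy).elim (fun h' => h'.1) fun h' => absurd h h'.2.ne
      exact h₁.trans_lt (hcol _ hz y hy rfl this)
  · refine ⟨fun x hx y hy hr hlt => h ((mem_cells x).2 hx) ((mem_cells y).2 hy) ?_,
      fun x hx y hy hc hlt => h ((mem_cells x).2 hx) ((mem_cells y).2 hy) ?_⟩
    · exact Prod.lt_iff.2 (Or.inr ⟨hr.le, hlt⟩)
    · exact Prod.lt_iff.2 (Or.inl ⟨hlt, hc.le⟩)

namespace IsSYT

variable {μ : YoungDiagram} {f : ℕ × ℕ → ℕ} {c : ℕ × ℕ}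

theorem bijOn (hf : IsSYT μ f) : Set.BijOn f μ.cells (Set.Icc 1 μ.card) := hf.2.1

theorem strictMonoOn (hf : IsSYT μ f) : StrictMonoOn f μ.cells := (isSYT_iff.1 hf).2.2

theorem mem_Icc (hf : IsSYT μ f) {x : ℕ × ℕ} (hx : x ∈ μ) : f x ∈ Set.Icc 1 μ.card :=
  hf.bijOn.mapsTo ((mem_cells x).2 hx)

theorem eq_of_apply_eq (hf : IsSYT μ f) {x y : ℕ × ℕ} (hx : x ∈ μ) (hy : y ∈ μ)
    (h : f x = f y) : x = y :=
  hf.bijOn.injOn ((mem_cells x).2 hx) ((mem_cells y).2 hy) h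

theorem exists_apply_eq (hf : IsSYT μ f) {v : ℕ} (hv : v ∈ Set.Icc 1 μ.card) :
    ∃ x ∈ μ, f x = v := by
  obtain ⟨x, hx, rfl⟩ := hf.bijOn.surjOn hv
  exact ⟨x, (mem_cells x).1 hx, rfl⟩

theorem isCorner_of_apply_eq_card (hf : IsSYT μ f) (hc : c ∈ μ) (hfc : f c = μ.card) :
    μ.IsCorner c := by
  have hlt : ∀ x ∈ μ, c < x → False := fun x hx hcx => by
    have := hf.strictMonoOn ((mem_cells c).2 hc) ((mem_cells x).2 hx) hcx
    have := (hf.mem_Icc hx).2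
    omega
  exact ⟨hc, fun h => hlt _ h (Prod.lt_iff.2 (Or.inl ⟨Nat.lt_succ_self _, le_rfl⟩)),
    fun h => hlt _ h (Prod.lt_iff.2 (Or.inr ⟨le_rfl, Nat.lt_succ_self _⟩))⟩

theorem bijOn_eraseCorner_iff {g : ℕ × ℕ → ℕ} (hc : μ.IsCorner c) (hgc : g c = μ.card) :
    Set.BijOn g μ.cells (Set.Icc 1 μ.card) ↔
      Set.BijOn g (μ.eraseCorner c hc).cells (Set.Icc 1 (μ.eraseCorner c hc).card) := by
  rw [← insert_coe_cells_eraseCorner (hc := hc), ← card_eraseCorner (hc := hc),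
    ← Set.insert_Icc_right_eq_Icc_add_one (by omega), card_eraseCorner, ← hgc]
  refine Set.BijOn.insert_iff (by simp) ?_
  rw [hgc, ← card_eraseCorner (hc := hc)]
  simp

theorem update_card (hc : μ.IsCorner c) (hf : IsSYT (μ.eraseCorner c hc) f) :
    IsSYT μ (update f c μ.card) := by
  obtain ⟨h₀, hbij, hmono⟩ := isSYT_iff.1 hf
  refine isSYT_iff.2 ⟨fun x hx => ?_, ?_, fun x hx y hy hxy => ?_⟩
  · rw [update_of_ne (ne_of_mem_of_not_mem hc.mem hx).symm]
    exact h₀ x fun h => hx (mem_eraseCorner.1 h).1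
  · refine (bijOn_eraseCorner_iff hc (update_self c _ f)).2 (hbij.congr fun x hx => ?_)
    exact (update_of_ne (mem_eraseCorner.1 ((mem_cells x).1 hx)).2 _ _).symm
  rw [Finset.mem_coe, mem_cells] at hx hy
  have hxc : x ≠ c := fun h => hxy.ne (h.trans (hc.eq_of_le hy (h ▸ hxy.le)).symm)
  rw [update_of_ne hxc]
  by_cases hyc : y = c
  · rw [hyc, update_self, ← card_eraseCorner (hc := hc)]
    exact Nat.lt_succ_of_le (hf.mem_Icc (mem_eraseCorner.2 ⟨hx, hxc⟩)).2
  · rw [update_of_ne hyc]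
    exact hmono ((mem_cells x).2 (mem_eraseCorner.2 ⟨hx, hxc⟩))
      ((mem_cells y).2 (mem_eraseCorner.2 ⟨hy, hyc⟩)) hxy

theorem eraseCorner_update_zero (hf : IsSYT μ f) (hc : μ.IsCorner c) (hfc : f c = μ.card) :
    IsSYT (μ.eraseCorner c hc) (update f c 0) := by
  obtain ⟨h₀, hbij, hmono⟩ := isSYT_iff.1 hf
  have heq : Set.EqOn f (update f c 0) (μ.eraseCorner c hc).cells := fun x hx =>
    (update_of_ne (mem_eraseCorner.1 ((mem_cells x).1 hx)).2 _ _).symm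
  refine isSYT_iff.2 ⟨fun x hx => ?_, ((bijOn_eraseCorner_iff hc hfc).1 hbij).congr heq,
    fun x hx y hy hxy => ?_⟩
  · by_cases hxc : x = c
    · rw [hxc, update_self]
    · rw [update_of_ne hxc]
      exact h₀ x fun h => hx (mem_eraseCorner.2 ⟨h, hxc⟩)
  · have hsub : ((μ.eraseCorner c hc).cells : Set (ℕ × ℕ)) ⊆ μ.cells := by
      rw [coe_cells_eraseCorner]
      exact Set.sdiff_subset
    rw [← heq hx, ← heq hy]
    exact hmono (hsub hx) (hsub hy) hxy

theorem swap_comp (hf : IsSYT μ f) {a b : ℕ × ℕ} {i : ℕ} (ha : a ∈ μ) (hb : b ∈ μ)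
    (hfa : f a = i) (hfb : f b = i + 1) (hab : ¬ a ≤ b) :
    IsSYT μ (Equiv.swap i (i + 1) ∘ f) := by
  obtain ⟨h₀, hbij, hmono⟩ := isSYT_iff.1 hf
  have hi := hfa ▸ hf.mem_Icc ha
  have hi' := hfb ▸ hf.mem_Icc hb
  rw [Set.mem_Icc] at hi hi'
  refine isSYT_iff.2 ⟨fun x hx => ?_, (Equiv.bijOn _ fun v => ?_).comp hbij,
    fun x hx y hy hxy => ?_⟩
  · rw [comp_apply, h₀ x hx, Equiv.swap_apply_of_ne_of_ne (by omega) (by omega)]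
  · rw [Set.mem_Icc, Set.mem_Icc, Equiv.swap_apply_def]
    split_ifs <;> omega
  · have hlt := hmono hx hy hxy
    have hne : ¬ (f x = i ∧ f y = i + 1) := fun ⟨hx', hy'⟩ => by
      rw [Finset.mem_coe, mem_cells] at hx hy
      rw [hf.eq_of_apply_eq hx ha (hx'.trans hfa.symm),
        hf.eq_of_apply_eq hy hb (hy'.trans hfb.symm)] at hxy
      exact hab hxy.le
    simp only [comp_apply, Equiv.swap_apply_def]
    split_ifs <;> omega

end IsSYT

theorem exists_isSYT (μ : YoungDiagram) : ∃ f, IsSYT μ f := by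
  induction h : μ.card generalizing μ with
  | zero =>
    have hμ : μ.cells = ∅ := Finset.card_eq_zero.1 h
    refine ⟨0, isSYT_iff.2 ⟨fun _ _ => rfl, ?_, ?_⟩⟩ <;> simp [hμ, h, StrictMonoOn]
  | succ n ih =>
    obtain ⟨c, hc⟩ := exists_isCorner (μ := μ) (by omega)
    obtain ⟨f, hf⟩ := ih (μ.eraseCorner c hc) (by have := card_eraseCorner (hc := hc); omega)
    exact ⟨_, hf.update_card hc⟩

theorem dkt_iff {μ : YoungDiagram} {i : ℕ} {f f' : ℕ × ℕ → ℕ} :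
    DKT μ i f f' ↔ IsSYT μ f ∧ IsSYT μ f' ∧ 1 ≤ i ∧ f' = Equiv.swap i (i + 1) ∘ f := by
  simp only [DKT, funext_iff, comp_apply, Equiv.swap_apply_def]

section Descents

variable {μ : YoungDiagram} {f : ℕ × ℕ → ℕ} {j : ℕ}

theorem IsSYT.succ_le_card_of_mem_sytDescents (hf : IsSYT μ f) (hj : j ∈ SYTDescents μ f) :
    j + 1 ≤ μ.card := by
  obtain ⟨_, _, c', hc', _, hfc', _⟩ := hj
  exact hfc' ▸ (hf.mem_Icc hc').2

theorem IsSYT.mem_sytDescents_iff (hf : IsSYT μ f) {a b : ℕ × ℕ} (ha : a ∈ μ) (hb : b ∈ μ)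
    (hfa : f a = j) (hfb : f b = j + 1) : j ∈ SYTDescents μ f ↔ a.1 < b.1 := by
  refine ⟨fun ⟨x, hx, y, hy, hfx, hfy, hxy⟩ => ?_, fun h => ⟨a, ha, b, hb, hfa, hfb, h⟩⟩
  rwa [hf.eq_of_apply_eq hx ha (hfx.trans hfa.symm),
    hf.eq_of_apply_eq hy hb (hfy.trans hfb.symm)] at hxy

theorem mem_sytDescents_update_card_iff {c : ℕ × ℕ} (hc : μ.IsCorner c) (hj : j + 1 < μ.card) :
    j ∈ SYTDescents μ (update f c μ.card) ↔ j ∈ SYTDescents (μ.eraseCorner c hc) f := by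
  constructor
  · rintro ⟨x, hx, y, hy, hfx, hfy, hxy⟩
    have hxc : x ≠ c := by rintro rfl; rw [update_self] at hfx; omega
    have hyc : y ≠ c := by rintro rfl; rw [update_self] at hfy; omega
    rw [update_of_ne hxc] at hfx
    rw [update_of_ne hyc] at hfy
    exact ⟨x, mem_eraseCorner.2 ⟨hx, hxc⟩, y, mem_eraseCorner.2 ⟨hy, hyc⟩, hfx, hfy, hxy⟩
  · rintro ⟨x, hx, y, hy, hfx, hfy, hxy⟩
    rw [mem_eraseCorner] at hx hy
    exact ⟨x, hx.1, y, hy.1, by rw [update_of_ne hx.2, hfx], by rw [update_of_ne hy.2, hfy], hxy⟩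

theorem sytDescents_update_card_inter {c : ℕ × ℕ} (hc : μ.IsCorner c) {s : Set ℕ}
    (hs : ∀ j ∈ s, j + 1 < μ.card) :
    SYTDescents μ (update f c μ.card) ∩ s = SYTDescents (μ.eraseCorner c hc) f ∩ s :=
  Set.ext fun j => and_congr_left fun hj => mem_sytDescents_update_card_iff hc (hs j hj)

end Descents

theorem DKT.succ_le_card {μ : YoungDiagram} {i : ℕ} {f f' : ℕ × ℕ → ℕ} (hd : DKT μ i f f')
    (h : (SYTDescents μ f ∩ {i - 1, i}).ncard = 1) : i + 1 ≤ μ.card := by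
  obtain ⟨hf, hf', -, hf'f⟩ := hd
  obtain ⟨j, hj, hji⟩ := Set.nonempty_of_ncard_ne_zero (h ▸ one_ne_zero)
  have hjcard := hf.succ_le_card_of_mem_sytDescents hj
  have hi : i ≤ μ.card := by rcases hji with rfl | rfl <;> omega
  refine lt_of_le_of_ne hi fun hicard => ?_
  obtain ⟨a, ha, hfa⟩ := hf.exists_apply_eq ⟨by omega, hi⟩
  have := (hf'.mem_Icc ha).2
  rw [hf'f, if_pos hfa] at this
  omega

namespace InitialDKT

variable {μ : YoungDiagram} {f f' : ℕ × ℕ → ℕ}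

protected theorem symm (h : InitialDKT μ f f') : InitialDKT μ f' f := by
  obtain ⟨i, hd, h₁, h₂⟩ := h
  obtain ⟨hf, hf', hi, rfl⟩ := dkt_iff.1 hd
  refine ⟨i, dkt_iff.2 ⟨hf', hf, hi, ?_⟩, h₂, h₁⟩
  ext
  simp

instance : Std.Symm (InitialDKT μ) := ⟨fun _ _ => InitialDKT.symm⟩

theorem isSYT_right (h : InitialDKT μ f f') : IsSYT μ f' :=
  let ⟨_, ⟨_, hf', _⟩, _⟩ := h; hf'

theorem update_card {c : ℕ × ℕ} (hc : μ.IsCorner c) (h : InitialDKT (μ.eraseCorner c hc) f f') :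
    InitialDKT μ (update f c μ.card) (update f' c μ.card) := by
  obtain ⟨i, hd, h₁, h₂⟩ := h
  have hi := hd.succ_le_card h₁
  have hcard := card_eraseCorner (hc := hc)
  obtain ⟨hf, hf', hi₁, rfl⟩ := dkt_iff.1 hd
  have hs : ∀ j ∈ ({i - 1, i} : Set ℕ), j + 1 < μ.card := by
    rintro j (rfl | rfl) <;> omega
  refine ⟨i, dkt_iff.2 ⟨hf.update_card hc, hf'.update_card hc, hi₁, ?_⟩, ?_, ?_⟩
  · rw [comp_update, Equiv.swap_apply_of_ne_of_ne (by omega) (by omega)]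
  · rwa [sytDescents_update_card_inter hc hs]
  · rwa [sytDescents_update_card_inter hc hs]

end InitialDKT

theorem initialDKT_swap_comp {μ : YoungDiagram} {f : ℕ × ℕ → ℕ} (hf : IsSYT μ f)
    {p a b : ℕ × ℕ} {j : ℕ} (hp : p ∈ μ) (ha : a ∈ μ) (hb : b ∈ μ)
    (hfp : f p = j) (hfa : f a = j + 1) (hfb : f b = j + 2) (hbp : b.1 ≤ p.1) (hpa : p.1 < a.1) :
    InitialDKT μ f (Equiv.swap (j + 1) (j + 2) ∘ f) := by
  have hg := hf.swap_comp ha hb hfa hfb fun h => by have := h.1; omega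
  have hgp : (Equiv.swap (j + 1) (j + 2) ∘ f) p = j := by
    rw [comp_apply, hfp, Equiv.swap_apply_of_ne_of_ne (by omega) (by omega)]
  have hga : (Equiv.swap (j + 1) (j + 2) ∘ f) a = j + 2 := by
    rw [comp_apply, hfa, Equiv.swap_apply_left]
  have hgb : (Equiv.swap (j + 1) (j + 2) ∘ f) b = j + 1 := by
    rw [comp_apply, hfb, Equiv.swap_apply_right]
  refine ⟨j + 1, dkt_iff.2 ⟨hf, hg, by omega, rfl⟩, ?_, ?_⟩ <;>
    rw [Nat.add_sub_cancel, Set.ncard_inter_pair_eq_one_iff (by omega)]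
  · rw [hf.mem_sytDescents_iff hp ha hfp hfa, hf.mem_sytDescents_iff ha hb hfa hfb]
    omega
  · rw [hg.mem_sytDescents_iff hp hb hgp hgb, hg.mem_sytDescents_iff hb ha hgb hga]
    omega

def TableauxConnected (μ : YoungDiagram) : Prop :=
  ∀ f g, IsSYT μ f → IsSYT μ g → Relation.ReflTransGen (InitialDKT μ) f g

namespace TableauxConnected

variable {μ : YoungDiagram} {c : ℕ × ℕ} {f g : ℕ × ℕ → ℕ}

theorem reflTransGen_of_apply_eq_card (hc : μ.IsCorner c)
    (hconn : TableauxConnected (μ.eraseCorner c hc)) (hf : IsSYT μ f) (hg : IsSYT μ g)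
    (hfc : f c = μ.card) (hgc : g c = μ.card) : Relation.ReflTransGen (InitialDKT μ) f g := by
  have h : Relation.ReflTransGen (InitialDKT μ) (update (update f c 0) c μ.card)
      (update (update g c 0) c μ.card) := Relation.ReflTransGen.lift (update · c μ.card)
    (fun _ _ => InitialDKT.update_card hc) _ _
    (hconn _ _ (hf.eraseCorner_update_zero hc hfc) (hg.eraseCorner_update_zero hc hgc))
  rwa [update_idem, update_idem, update_eq_self_iff.2 hfc.symm,
    update_eq_self_iff.2 hgc.symm] at h

theorem exists_reflTransGen_apply_eq_card (hc : μ.IsCorner c)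
    (hconn : TableauxConnected (μ.eraseCorner c hc)) {c' p : ℕ × ℕ}
    (hc' : (μ.eraseCorner c hc).IsCorner c')
    (hp : ((μ.eraseCorner c hc).eraseCorner c' hc').IsCorner p)
    (hcp : c.1 ≤ p.1) (hpc' : p.1 < c'.1) (hf : IsSYT μ f) (hfc : f c = μ.card) :
    ∃ g, IsSYT μ g ∧ g c' = μ.card ∧ Relation.ReflTransGen (InitialDKT μ) f g := by
  set ν := μ.eraseCorner c hc
  set ν₂ := ν.eraseCorner c' hc'
  have hpν := mem_eraseCorner.1 hp.mem
  have hpμ := mem_eraseCorner.1 hpν.1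
  have hc'μ := mem_eraseCorner.1 hc'.mem
  have hcard₁ : ν.card + 1 = μ.card := card_eraseCorner
  have hcard₂ : ν₂.card + 1 = ν.card := card_eraseCorner
  obtain ⟨T, hT, hTp, hTc', hTc⟩ : ∃ T, IsSYT μ T ∧
      T p = ν₂.card ∧ T c' = ν₂.card + 1 ∧ T c = ν₂.card + 2 := by
    obtain ⟨t, ht⟩ := exists_isSYT (ν₂.eraseCorner p hp)
    refine ⟨update (update (update t p ν₂.card) c' ν.card) c μ.card,
      ((ht.update_card hp).update_card hc').update_card hc, ?_, ?_, ?_⟩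
    · rw [update_of_ne hpμ.2, update_of_ne hpν.2, update_self]
    · rw [update_of_ne hc'μ.2, update_self]; omega
    · rw [update_self]; omega
  have hstep := initialDKT_swap_comp hT hpμ.1 hc'μ.1 hc.mem hTp hTc' hTc hcp hpc'
  refine ⟨_, hstep.isSYT_right, ?_, Relation.ReflTransGen.tail ?_ hstep⟩
  · rw [comp_apply, hTc', Equiv.swap_apply_left]; omega
  · exact hconn.reflTransGen_of_apply_eq_card hc hf hT hfc (by omega)

theorem exists_reflTransGen_card_lastRow
    (hconn : ∀ c (hc : μ.IsCorner c), TableauxConnected (μ.eraseCorner c hc))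
    (hf : IsSYT μ f) (hc : μ.IsCorner c) (hfc : f c = μ.card) :
    ∃ g d, IsSYT μ g ∧ μ.IsCorner d ∧ μ.rowLen (d.1 + 1) = 0 ∧ g d = μ.card ∧
      Relation.ReflTransGen (InitialDKT μ) f g := by
  induction h : μ.colLen 0 - c.1 using Nat.strong_induction_on generalizing f c with
  | _ k ih =>
  by_cases hlast : μ.rowLen (c.1 + 1) = 0
  · exact ⟨f, c, hf, hc, hlast, hfc, .refl⟩
  obtain ⟨c', hc', p, hp, hcp, hpc', hc'μ⟩ := hc.exists_corners_below (Nat.pos_of_ne_zero hlast)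
  obtain ⟨g, hg, hgc', hfg⟩ :=
    (hconn c hc).exists_reflTransGen_apply_eq_card hc hc' hp hcp hpc' hf hfc
  have hc'col : c'.1 < μ.colLen 0 :=
    mem_iff_lt_colLen.1 (mem_iff_lt_rowLen.2 (by have := isCorner_iff.1 hc'μ; omega))
  obtain ⟨g', d, hg', hd, hd₀, hg'd, hgg'⟩ := ih _ (by omega) hg hc'μ hgc' rfl
  exact ⟨g', d, hg', hd, hd₀, hg'd, hfg.trans hgg'⟩

end TableauxConnected

theorem tableauxConnected (μ : YoungDiagram) : TableauxConnected μ := by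
  induction h : μ.card using Nat.strong_induction_on generalizing μ with
  | _ n ih =>
  intro f g hf hg
  rcases Nat.eq_zero_or_pos n with rfl | hn
  · have hμ : ∀ x, x ∉ μ := fun x hx =>
      Finset.card_ne_zero.2 ⟨x, (mem_cells x).2 hx⟩ h
    rw [funext fun x => (hf.1 x (hμ x)).trans (hg.1 x (hμ x)).symm]
  have hconn (c : ℕ × ℕ) (hc : μ.IsCorner c) : TableauxConnected (μ.eraseCorner c hc) :=
    ih _ (by have := card_eraseCorner (hc := hc); omega) _ rfl
  obtain ⟨a, ha, hfa⟩ := hf.exists_apply_eq ⟨by omega, le_rfl⟩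
  obtain ⟨b, hb, hgb⟩ := hg.exists_apply_eq ⟨by omega, le_rfl⟩
  obtain ⟨f', d, hf', hd, hd₀, hf'd, hff'⟩ :=
    TableauxConnected.exists_reflTransGen_card_lastRow hconn hf
      (hf.isCorner_of_apply_eq_card ha hfa) hfa
  obtain ⟨g', e, hg', he, he₀, hg'e, hgg'⟩ :=
    TableauxConnected.exists_reflTransGen_card_lastRow hconn hg
      (hg.isCorner_of_apply_eq_card hb hgb) hgb
  obtain rfl := hd.eq_of_rowLen_succ_eq_zero he hd₀ he₀
  exact hff'.trans (((hconn d hd).reflTransGen_of_apply_eq_card hd hf' hg' hf'd hg'e).trans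
    (symm hgg'))

/-- The graph on standard Young tableaux of a fixed shape `λ` whose edges are
the initial dual Knuth transformations is connected. -/
theorem initialDKT_connected (μ : YoungDiagram) (f g : ℕ × ℕ → ℕ)
    (hf : IsSYT μ f) (hg : IsSYT μ g) :
    Relation.ReflTransGen (InitialDKT μ) f g :=
  tableauxConnected μ f g hf hg
end

section
/- Let λ be a partition of r with ℓ removable (outer) corners giving shapes μ^1, ..., μ^ℓ. For any distinct i, j, there exist standard Young tableaux Q', Q of shape λ such that Q' restricted to [r-1] has shape μ^i, Q restricted to [r-1] has shape μ^j, and Q' and Q differ by a single dual Knuth transformation. -/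
/-- `c` is a removable (outer) corner of the Young diagram `μ`. -/
def IsRemovableCorner (μ : YoungDiagram) (c : ℕ × ℕ) : Prop :=
  c ∈ μ ∧ (c.1 + 1, c.2) ∉ μ ∧ (c.1, c.2 + 1) ∉ μ

namespace DKTAux

def kfun (x : ℕ × ℕ) : ℕ := (x.1 + x.2)^2 + x.1

lemma kfun_lt {x y : ℕ × ℕ} (h1 : x.1 ≤ y.1) (h2 : x.2 ≤ y.2) (hne : x ≠ y) :
    kfun x < kfun y := by
  have hxy : x.1 ≠ y.1 ∨ x.2 ≠ y.2 := by
    by_contra h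
    push_neg at h
    exact hne (Prod.ext h.1 h.2)
  have hs : x.1 + x.2 < y.1 + y.2 := by omega
  have hx : x.1 ≤ x.1 + x.2 := Nat.le_add_right _ _
  unfold kfun
  nlinarith

lemma kfun_injective : Function.Injective kfun := by
  intro x y h
  unfold kfun at h
  have hx : x.1 ≤ x.1 + x.2 := Nat.le_add_right _ _
  have hy : y.1 ≤ y.1 + y.2 := Nat.le_add_right _ _
  have hs : x.1 + x.2 = y.1 + y.2 := by nlinarith
  rw [hs] at h
  have h1 : x.1 = y.1 := by omega
  have h2 : x.2 = y.2 := by omega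
  exact Prod.ext h1 h2

/-- the cells of `μ` other than the two corners `a`, `b` -/
def sAB (μ : YoungDiagram) (a b : ℕ × ℕ) : Finset (ℕ × ℕ) := (μ.cells.erase a).erase b

def tAB (μ : YoungDiagram) (a b : ℕ × ℕ) : Finset ℕ := (sAB μ a b).image kfun

def rank (μ : YoungDiagram) (a b : ℕ × ℕ) (x : ℕ × ℕ) : ℕ :=
  ((tAB μ a b).filter (· ≤ kfun x)).card

/-- the standard tableau with `μ.card` at corner `a`, `μ.card - 1` at corner `b`,
and the remaining cells filled by diagonal reading order. -/
def gfun (μ : YoungDiagram) (a b : ℕ × ℕ) (x : ℕ × ℕ) : ℕ :=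
  if x = a then μ.card else if x = b then μ.card - 1
  else if x ∈ μ then rank μ a b x else 0

lemma sAB_comm (μ : YoungDiagram) (a b : ℕ × ℕ) : sAB μ a b = sAB μ b a :=
  Finset.erase_right_comm

lemma mem_sAB {μ : YoungDiagram} {a b x : ℕ × ℕ} :
    x ∈ sAB μ a b ↔ x ∈ μ ∧ x ≠ a ∧ x ≠ b := by
  simp [sAB, Finset.mem_erase, YoungDiagram.mem_cells]
  tauto

lemma card_sAB {μ : YoungDiagram} {a b : ℕ × ℕ} (ha : a ∈ μ) (hb : b ∈ μ)
    (hne : a ≠ b) : (sAB μ a b).card = μ.card - 2 := by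
  unfold sAB
  rw [Finset.card_erase_of_mem, Finset.card_erase_of_mem]
  · rfl
  · exact (YoungDiagram.mem_cells _).2 ha
  · exact Finset.mem_erase.2 ⟨hne.symm, (YoungDiagram.mem_cells _).2 hb⟩

lemma card_tAB {μ : YoungDiagram} {a b : ℕ × ℕ} (ha : a ∈ μ) (hb : b ∈ μ)
    (hne : a ≠ b) : (tAB μ a b).card = μ.card - 2 := by
  rw [tAB, Finset.card_image_of_injective _ kfun_injective, card_sAB ha hb hne]

lemma two_le_card {μ : YoungDiagram} {a b : ℕ × ℕ} (ha : a ∈ μ) (hb : b ∈ μ)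
    (hne : a ≠ b) : 2 ≤ μ.card :=
  Finset.one_lt_card.2 ⟨a, (YoungDiagram.mem_cells _).2 ha, b,
    (YoungDiagram.mem_cells _).2 hb, hne⟩

lemma rank_pos {μ : YoungDiagram} {a b x : ℕ × ℕ} (hx : x ∈ sAB μ a b) :
    1 ≤ rank μ a b x := by
  have : kfun x ∈ (tAB μ a b).filter (· ≤ kfun x) := by
    simp only [Finset.mem_filter, tAB, Finset.mem_image]
    exact ⟨⟨x, hx, rfl⟩, le_refl _⟩
  exact Finset.card_pos.2 ⟨_, this⟩

lemma rank_le {μ : YoungDiagram} (a b x : ℕ × ℕ) :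
    rank μ a b x ≤ (tAB μ a b).card :=
  Finset.card_le_card (Finset.filter_subset _ _)

lemma rank_strict_mono {μ : YoungDiagram} {a b x y : ℕ × ℕ} (hy : y ∈ sAB μ a b)
    (hk : kfun x < kfun y) : rank μ a b x < rank μ a b y := by
  apply Finset.card_lt_card
  constructor
  · intro z hz
    simp only [Finset.mem_filter] at hz ⊢
    exact ⟨hz.1, le_of_lt (lt_of_le_of_lt hz.2 hk)⟩
  · intro hsub
    have hmem : kfun y ∈ (tAB μ a b).filter (· ≤ kfun y) := by
      simp only [Finset.mem_filter, tAB, Finset.mem_image]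
      exact ⟨⟨y, hy, rfl⟩, le_refl _⟩
    have := hsub hmem
    simp only [Finset.mem_filter] at this
    omega

lemma rank_injOn {μ : YoungDiagram} {a b x y : ℕ × ℕ} (hx : x ∈ sAB μ a b)
    (hy : y ∈ sAB μ a b) (h : rank μ a b x = rank μ a b y) : x = y := by
  rcases lt_trichotomy (kfun x) (kfun y) with hk | hk | hk
  · have := rank_strict_mono hy hk; omega
  · exact kfun_injective hk
  · have := rank_strict_mono hx hk; omega

lemma corner_row {μ : YoungDiagram} {c x : ℕ × ℕ} (hc : IsRemovableCorner μ c)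
    (hx : x ∈ μ) (hrow : x.1 = c.1) (hcol : c.2 < x.2) : False := by
  apply hc.2.2
  exact μ.up_left_mem (le_of_eq hrow.symm) hcol (by simpa using hx)

lemma corner_col {μ : YoungDiagram} {c x : ℕ × ℕ} (hc : IsRemovableCorner μ c)
    (hx : x ∈ μ) (hcol : x.2 = c.2) (hrow : c.1 < x.1) : False := by
  apply hc.2.1
  exact μ.up_left_mem hrow (le_of_eq hcol.symm) (by simpa using hx)

lemma gfun_a {μ : YoungDiagram} (a b : ℕ × ℕ) : gfun μ a b a = μ.card := by
  simp [gfun]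

lemma gfun_b {μ : YoungDiagram} {a b : ℕ × ℕ} (hne : a ≠ b) :
    gfun μ a b b = μ.card - 1 := by
  simp [gfun, hne.symm]

lemma gfun_s {μ : YoungDiagram} {a b x : ℕ × ℕ} (hx : x ∈ sAB μ a b) :
    gfun μ a b x = rank μ a b x := by
  rw [mem_sAB] at hx
  simp [gfun, hx.1, hx.2.1, hx.2.2]

lemma isSYT_gfun {μ : YoungDiagram} {a b : ℕ × ℕ} (ha : IsRemovableCorner μ a)
    (hb : IsRemovableCorner μ b) (hne : a ≠ b) : IsSYT μ (gfun μ a b) := by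
  have hR : 2 ≤ μ.card := two_le_card ha.1 hb.1 hne
  have htc : (tAB μ a b).card = μ.card - 2 := card_tAB ha.1 hb.1 hne
  have hsc : (sAB μ a b).card = μ.card - 2 := card_sAB ha.1 hb.1 hne
  -- trichotomy helper
  have hcases : ∀ x : ℕ × ℕ, x ∈ μ → x = a ∨ x = b ∨ x ∈ sAB μ a b := by
    intro x hx
    by_cases h1 : x = a
    · exact Or.inl h1
    by_cases h2 : x = b
    · exact Or.inr (Or.inl h2)
    · exact Or.inr (Or.inr (mem_sAB.2 ⟨hx, h1, h2⟩))
  have hval : ∀ x ∈ sAB μ a b, 1 ≤ gfun μ a b x ∧ gfun μ a b x ≤ μ.card - 2 := by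
    intro x hx
    rw [gfun_s hx]
    exact ⟨rank_pos hx, htc ▸ rank_le a b x⟩
  refine ⟨?_, ⟨?_, ?_, ?_⟩, ?_, ?_⟩
  · -- zero off the diagram
    intro x hx
    have h1 : x ≠ a := fun h => hx (h ▸ ha.1)
    have h2 : x ≠ b := fun h => hx (h ▸ hb.1)
    simp [gfun, h1, h2, hx]
  · -- MapsTo
    intro x hx
    simp only [Finset.coe_sort_coe, Finset.mem_coe, YoungDiagram.mem_cells] at hx
    rcases hcases x hx with rfl | rfl | hx'
    · rw [gfun_a]; constructor <;> omega
    · rw [gfun_b hne]; constructor <;> omega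
    · have := hval x hx'; constructor <;> omega
  · -- InjOn
    intro x hx y hy hxy
    simp only [Finset.coe_sort_coe, Finset.mem_coe, YoungDiagram.mem_cells] at hx hy
    rcases hcases x hx with rfl | rfl | hx' <;> rcases hcases y hy with rfl | rfl | hy'
    · rfl
    · rw [gfun_a, gfun_b hne] at hxy; omega
    · rw [gfun_a] at hxy; have := hval y hy'; omega
    · rw [gfun_b hne, gfun_a] at hxy; omega
    · rfl
    · rw [gfun_b hne] at hxy; have := hval y hy'; omega
    · rw [gfun_a] at hxy; have := hval x hx'; omega
    · rw [gfun_b hne] at hxy; have := hval x hx'; omega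
    · rw [gfun_s hx', gfun_s hy'] at hxy
      exact rank_injOn hx' hy' hxy
  · -- SurjOn
    intro m hm
    simp only [Set.mem_Icc] at hm
    rcases eq_or_ne m μ.card with rfl | hm1
    · exact ⟨a, by simpa using ha.1, gfun_a a b⟩
    rcases eq_or_ne m (μ.card - 1) with rfl | hm2
    · exact ⟨b, by simpa using hb.1, gfun_b hne⟩
    · -- m ≤ μ.card - 2 : use pigeonhole surjectivity of rank on sAB
      have hmle : m ≤ μ.card - 2 := by omega
      have hsurj := Finset.surj_on_of_inj_on_of_card_le
        (s := sAB μ a b) (t := Finset.Icc 1 (μ.card - 2))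
        (fun x _ => rank μ a b x)
        (fun x hx => Finset.mem_Icc.2 ⟨rank_pos hx, htc ▸ rank_le a b x⟩)
        (fun x y hx hy h => rank_injOn hx hy h)
        (by rw [Nat.card_Icc, hsc]; omega)
      obtain ⟨x, hx, hxm⟩ := hsurj m (Finset.mem_Icc.2 ⟨hm.1, hmle⟩)
      refine ⟨x, ?_, ?_⟩
      · have := mem_sAB.1 hx
        simpa using this.1
      · rw [gfun_s hx, hxm]
  · -- rows
    intro c1 h1 c2 h2 hrow hcol
    have hne12 : c1 ≠ c2 := fun h => by rw [h] at hcol; omega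
    rcases hcases c1 h1 with rfl | rfl | h1'
    · exact absurd (corner_row ha h2 hrow.symm hcol) (by simp)
    · exact absurd (corner_row hb h2 hrow.symm hcol) (by simp)
    rcases hcases c2 h2 with rfl | rfl | h2'
    · rw [gfun_a]; have := hval c1 h1'; omega
    · rw [gfun_b hne]; have := hval c1 h1'; omega
    · rw [gfun_s h1', gfun_s h2']
      exact rank_strict_mono h2' (kfun_lt (le_of_eq hrow) (le_of_lt hcol) hne12)
  · -- columns
    intro c1 h1 c2 h2 hcol hrow
    have hne12 : c1 ≠ c2 := fun h => by rw [h] at hrow; omega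
    rcases hcases c1 h1 with rfl | rfl | h1'
    · exact absurd (corner_col ha h2 hcol.symm hrow) (by simp)
    · exact absurd (corner_col hb h2 hcol.symm hrow) (by simp)
    rcases hcases c2 h2 with rfl | rfl | h2'
    · rw [gfun_a]; have := hval c1 h1'; omega
    · rw [gfun_b hne]; have := hval c1 h1'; omega
    · rw [gfun_s h1', gfun_s h2']
      exact rank_strict_mono h2' (kfun_lt (le_of_lt hrow) (le_of_eq hcol) hne12)

end DKTAux

/-- Let `λ` be a partition of `r`.  For any two distinct removable corners of
`λ` (giving shapes `μ^i ≠ μ^j` upon removal), there exist standard Young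
tableaux `Q'`, `Q` of shape `λ` such that `Q'` restricted to `[r-1]` has shape
`μ^i` (i.e. the entry `r` of `Q'` lies in the first corner), `Q` restricted to
`[r-1]` has shape `μ^j` (the entry `r` of `Q` lies in the second corner), and
`Q'`, `Q` differ by a single dual Knuth transformation. -/
theorem exists_DKT_between_corners (μ : YoungDiagram) (c c' : ℕ × ℕ)
    (hc : IsRemovableCorner μ c) (hc' : IsRemovableCorner μ c') (hne : c ≠ c') :
    ∃ f f' : ℕ × ℕ → ℕ, ∃ i : ℕ,
      DKT μ i f f' ∧ f c = μ.card ∧ f' c' = μ.card := by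
  classical
  open DKTAux in
  refine ⟨gfun μ c c', gfun μ c' c, μ.card - 1, ⟨isSYT_gfun hc hc' hne,
    isSYT_gfun hc' hc hne.symm, ?_, ?_⟩, gfun_a c c', gfun_a c' c⟩
  · have := two_le_card hc.1 hc'.1 hne
    omega
  · intro x
    have hR : 2 ≤ μ.card := two_le_card hc.1 hc'.1 hne
    by_cases h1 : x = c
    · subst h1
      rw [gfun_a, gfun_b hne.symm]
      rw [if_neg (by omega), if_pos (by omega)]
    by_cases h2 : x = c'
    · subst h2
      rw [gfun_b hne, gfun_a]
      rw [if_pos rfl]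
      omega
    by_cases h3 : x ∈ μ
    · have hx : x ∈ sAB μ c c' := mem_sAB.2 ⟨h3, h1, h2⟩
      have hx' : x ∈ sAB μ c' c := (sAB_comm μ c c') ▸ hx
      have hrk : rank μ c c' x = rank μ c' c x := by
        unfold rank tAB
        rw [sAB_comm]
      have hv := rank_pos hx
      have hv2 : rank μ c c' x ≤ μ.card - 2 :=
        (card_tAB hc.1 hc'.1 hne) ▸ rank_le c c' x
      rw [gfun_s hx, gfun_s hx', ← hrk]
      rw [if_neg (by omega), if_neg (by omega)]
    · have h0 : gfun μ c c' x = 0 := by simp [gfun, h1, h2, h3]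
      have h0' : gfun μ c' c x = 0 := by simp [gfun, h1, h2, h3]
      rw [h0, h0']
      rw [if_neg (by omega), if_neg (by omega)]
end
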